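/- arXiv:1710.05393 — 2 statements merged into one kernel-verified Lean document; each statement's English description precedes it below -/
import Mathlib

section
/- Let L be a first-order language with no relation symbols and M an L-structure. Every nest-representable binary relation on M is a tolerance on M, i.e., it is compatible, reflexive, and symmetric. -/
open FirstOrder

/-- A binary relation on an `L`-structure is *compatible* if every function symbol's
interpretation preserves it componentwise. -/
def Compatible (L : Language) {M : Type*} [L.Structure M] (R : M → M → Prop) : Prop :=
  ∀ (n : ℕ) (f : L.Functions n) (a b : Fin n → M),
    (∀ i, R (a i) (b i)) → R (Language.Structure.funMap f a) (Language.Structure.funMap f b)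

/-- A *tolerance* is a compatible, reflexive and symmetric binary relation. -/
def IsTolerance (L : Language) {M : Type*} [L.Structure M] (Θ : M → M → Prop) : Prop :=
  Compatible L Θ ∧ Reflexive Θ ∧ Symmetric Θ

/-- The set of *nest-representable* relations: the smallest set of binary relations on `M`
containing `R ∘ R˘` for each compatible reflexive `R`, closed under arbitrary intersections,
and closed under `Ψ ↦ R ∘ Ψ ∘ R˘` for compatible reflexive `R`. -/
inductive NestRepresentable (L : Language) {M : Type*} [L.Structure M] : (M → M → Prop) → Prop
  | repr (R : M → M → Prop) (hc : Compatible L R) (hr : Reflexive R) :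
      NestRepresentable L (Relation.Comp R (flip R))
  | inter {K : Type*} (Θ : K → M → M → Prop) (h : ∀ k, NestRepresentable L (Θ k)) :
      NestRepresentable L (fun a b => ∀ k, Θ k a b)
  | comp (Ψ R : M → M → Prop) (hΨ : NestRepresentable L Ψ)
      (hc : Compatible L R) (hr : Reflexive R) :
      NestRepresentable L (Relation.Comp R (Relation.Comp Ψ (flip R)))

/-- Every nest-representable relation is a tolerance. -/
theorem nestRepresentable_isTolerance
    {L : Language} (hL : ∀ n, IsEmpty (L.Relations n))
    {M : Type*} [L.Structure M]
    (Θ : M → M → Prop) (hΘ : NestRepresentable L Θ) :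
    IsTolerance L Θ := by
  induction hΘ with
  | repr R hc hr =>
    refine ⟨?_, fun a => ⟨a, hr a, hr a⟩, fun a b ⟨c, h1, h2⟩ => ⟨c, h2, h1⟩⟩
    intro n f a b hab
    choose c h1 h2 using hab
    exact ⟨Language.Structure.funMap f c, hc n f a c h1, hc n f b c h2⟩
  | inter Θ h ih =>
    refine ⟨?_, fun a k => (ih k).2.1 a, fun a b hab k => (ih k).2.2 (hab k)⟩
    intro n f a b hab k
    exact (ih k).1 n f a b (fun i => hab i k)
  | comp Ψ R hΨ hc hr ih =>
    obtain ⟨ihc, ihr, ihs⟩ := ih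
    refine ⟨?_, fun a => ⟨a, hr a, a, ihr a, hr a⟩,
      fun a b ⟨c, h1, d, h2, h3⟩ => ⟨d, h3, c, ihs h2, h1⟩⟩
    intro n f a b hab
    choose c h1 h2 using hab
    choose d h2 h3 using h2
    exact ⟨Language.Structure.funMap f c, hc n f a c h1,
      Language.Structure.funMap f d, ihc n f c d h2, hc n f b d h3⟩
end

section
/- Let L be a first-order language with no relation symbols, M an L-structure, t and t' two L-terms with variables indexed by Fin m, and σ : Fin m → Fin m an involution (σ ∘ σ = id). Suppose that for every compatible reflexive binary relation R on M and every f : Fin m → M satisfying (R ∘ R˘) (f j) (f (σ j)) for all j, one has (R ∘ R˘) (t.realize f) (t'.realize f). Then for every nest-representable relation Ψ on M and every e : Fin m → M satisfying Ψ (e j) (e (σ j)) for all j, one has Ψ (t.realize e) (t'.realize e). (This is the inductive core of the theorem: the tolerance identity transfers from representable to all nest-representable tolerances.) -/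
open FirstOrder

/-! Induction on nest-representability. The only nontrivial case is `R ∘ Ψ ∘ R˘`: each
`e j` is `R`-related to a middle point on the `Ψ`-side, and choosing these middle points
consistently on every pair `{j, σ j}` yields an assignment `f` to which the induction hypothesis
applies; compatibility of `R` then carries `R (e j) (f j)` up to the realized terms. -/

namespace NestRepresentable

variable {L : Language} {M : Type*} [L.Structure M] {Ψ : M → M → Prop}

theorem reflexive (h : NestRepresentable L Ψ) : Reflexive Ψ := by
  induction h with
  | repr R _ hr => exact fun a => ⟨a, hr a, hr a⟩
  | inter Θ _ ih => exact fun a k => ih k a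
  | comp Ψ R _ _ hr ih => exact fun a => ⟨a, hr a, a, ih a, hr a⟩

theorem symmetric (h : NestRepresentable L Ψ) : Symmetric Ψ := by
  induction h with
  | repr R _ _ => exact fun a b ⟨c, hac, hbc⟩ => ⟨c, hbc, hac⟩
  | inter Θ _ ih => exact fun a b hab k => ih k (hab k)
  | comp Ψ R _ _ _ ih => exact fun a b ⟨x, hax, y, hxy, hby⟩ => ⟨y, hby, x, ih hxy, hax⟩

end NestRepresentable

theorem Compatible.realize {L : Language} {M : Type*} [L.Structure M] {R : M → M → Prop}
    (hc : Compatible L R) {α : Type*} (t : L.Term α) {a b : α → M}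
    (hab : ∀ i, R (a i) (b i)) : R (t.realize a) (t.realize b) := by
  induction t with
  | var i => exact hab i
  | func f ts ih => exact hc _ f _ _ fun i => ih i

/-- The middle point of `j` is taken from the witness for the pair `(j, σ j)` when `j ≤ σ j`
and from the witness for `(σ j, j)` otherwise; symmetry of `Ψ` reconciles the two. -/
theorem exists_middle_of_comp_comp_flip {ι M : Type*} [LinearOrder ι] {σ : ι → ι}
    (hσ : Function.Involutive σ) {R Ψ : M → M → Prop} (hΨr : Reflexive Ψ) (hΨs : Symmetric Ψ)
    {e : ι → M} (he : ∀ j, Relation.Comp R (Relation.Comp Ψ (flip R)) (e j) (e (σ j))) :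
    ∃ f : ι → M, (∀ j, R (e j) (f j)) ∧ ∀ j, Ψ (f j) (f (σ j)) := by
  choose u heu v huv hev using he
  refine ⟨fun j => if j ≤ σ j then u j else v (σ j), fun j => ?_, fun j => ?_⟩
  · by_cases hj : j ≤ σ j
    · simpa [hj] using heu j
    · simpa [hj, hσ j, flip] using hev (σ j)
  · rcases lt_trichotomy j (σ j) with hlt | heq | hgt
    · simpa [hlt.le, hσ j, hlt.not_ge] using huv j
    · simpa [← heq] using hΨr (u j)
    · simpa [hgt.not_ge, hgt.le, hσ j] using hΨs (huv (σ j))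

theorem transfer_to_nestRepresentable_general
    {L : Language}
    {M : Type*} [L.Structure M]
    {m : ℕ} (t t' : L.Term (Fin m)) (σ : Fin m → Fin m) (hσ : σ ∘ σ = id)
    (hrep : ∀ R : M → M → Prop, Compatible L R → Reflexive R →
      ∀ f : Fin m → M, (∀ j, Relation.Comp R (flip R) (f j) (f (σ j))) →
        Relation.Comp R (flip R) (t.realize f) (t'.realize f)) :
    ∀ Ψ : M → M → Prop, NestRepresentable L Ψ →
      ∀ e : Fin m → M, (∀ j, Ψ (e j) (e (σ j))) →
        Ψ (t.realize e) (t'.realize e) := by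
  intro Ψ hΨ
  induction hΨ with
  | repr R hc hr => exact hrep R hc hr
  | inter Θ _ ih => exact fun e he k => ih k e fun j => he j k
  | comp Ψ R hΨ hc _ ih =>
    intro e he
    have hσ' : Function.Involutive σ := congrFun hσ
    obtain ⟨f, hef, hf⟩ := exists_middle_of_comp_comp_flip hσ' hΨ.reflexive hΨ.symmetric he
    exact ⟨t.realize f, hc.realize t hef, t'.realize f, ih f hf, hc.realize t' hef⟩

/-- The inductive core of the theorem: a tolerance identity (encoded by the terms `t, t'` and
the pairing involution `σ`) holding for all representable relations `R ∘ R˘` transfers to all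
nest-representable relations. -/
theorem transfer_to_nestRepresentable
    {L : Language} (hL : ∀ n, IsEmpty (L.Relations n))
    {M : Type*} [L.Structure M]
    {m : ℕ} (t t' : L.Term (Fin m)) (σ : Fin m → Fin m) (hσ : σ ∘ σ = id)
    (hrep : ∀ R : M → M → Prop, Compatible L R → Reflexive R →
      ∀ f : Fin m → M, (∀ j, Relation.Comp R (flip R) (f j) (f (σ j))) →
        Relation.Comp R (flip R) (t.realize f) (t'.realize f)) :
    ∀ Ψ : M → M → Prop, NestRepresentable L Ψ →
      ∀ e : Fin m → M, (∀ j, Ψ (e j) (e (σ j))) →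
        Ψ (t.realize e) (t'.realize e) :=
  transfer_to_nestRepresentable_general t t' σ hσ hrep
end
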